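/- arXiv:2208.05869 — 2 statements merged into one kernel-verified Lean document; each statement's English description precedes it below -/
import Mathlib

section
/- Every acyclic weakly l.f.g.u. monoid is FmF-atomic. -/
/-!
In an acyclic monoid the `∣_H`-units are the units and a product of two non-units lies strictly
above both factors, so irreducibles are atoms. The f.g.u. germ at `x` yields a finite set `A` such
that every non-unit divisor of `x` is a product of non-units, each associated to an element of `A`.
By induction on the number of elements of `A` strictly below it, every non-unit divisor of `x` is
then a product of atoms, and every atom dividing `x` is associated to an element of `A`.

Up to `⊑`-equivalence a word of atoms is thus determined by how many of its letters fall into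
each of the finitely many classes of `A`, and `⊑` is the componentwise order of these counts.
A factorization of minimal length is `⊑`-minimal, and the count vectors of the minimal ones form
an antichain, which is finite by Dickson's lemma.
-/

open Pointwise

namespace FactPaper

/-- `u` is a `≼`-unit for the preorder-like relation `r` on a monoid. -/
def RUnit {M : Type*} [Monoid M] (r : M → M → Prop) (u : M) : Prop :=
  r u 1 ∧ r 1 u

/-- `u` is a `≼`-non-unit. -/
def RNonUnit {M : Type*} [Monoid M] (r : M → M → Prop) (u : M) : Prop :=
  ¬ RUnit r u

/-- The strict part `≺` of the relation `r`. -/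
def RLt {M : Type*} (r : M → M → Prop) (x y : M) : Prop :=
  r x y ∧ ¬ r y x

/-- `a` is a `≼`-irreducible. -/
def RIrred {M : Type*} [Monoid M] (r : M → M → Prop) (a : M) : Prop :=
  RNonUnit r a ∧
    ∀ y z : M, RNonUnit r y → RNonUnit r z → RLt r y a → RLt r z a → a ≠ y * z

/-- `a` is a `≼`-atom. -/
def RAtom {M : Type*} [Monoid M] (r : M → M → Prop) (a : M) : Prop :=
  RNonUnit r a ∧ ∀ y z : M, RNonUnit r y → RNonUnit r z → a ≠ y * z

/-- `a` is a `≼`-quark. -/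
def RQuark {M : Type*} [Monoid M] (r : M → M → Prop) (a : M) : Prop :=
  RNonUnit r a ∧ ¬ ∃ b : M, RNonUnit r b ∧ RLt r b a

/-- The divisibility preorder: `Dvd2 x y` iff `y ∈ M x M`. -/
def Dvd2 {M : Type*} [Monoid M] (x y : M) : Prop :=
  ∃ u v : M, y = u * x * v

/-- The restriction of a relation on `M` to a submonoid `K`. -/
def SubRel {M : Type*} [Monoid M] (r : M → M → Prop) (K : Submonoid M) (a b : K) : Prop :=
  r (a : M) (b : M)

/-- The preorder `⊑` on words induced by `r`: an injection of indices matching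
`r`-equivalent letters. -/
def WordLe {M : Type*} (r : M → M → Prop) (l m : List M) : Prop :=
  ∃ σ : Fin l.length ↪ Fin m.length,
    ∀ i : Fin l.length, r (l.get i) (m.get (σ i)) ∧ r (m.get (σ i)) (l.get i)

/-- `⊑`-equivalence of words. -/
def WordEquiv {M : Type*} (r : M → M → Prop) (l m : List M) : Prop :=
  WordLe r l m ∧ WordLe r m l

/-- `l` is a `≼`-factorization of `x`: a word of `≼`-irreducibles with product `x`. -/
def IsFac {M : Type*} [Monoid M] (r : M → M → Prop) (x : M) (l : List M) : Prop :=
  (∀ a ∈ l, RIrred r a) ∧ l.prod = x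

/-- `l` is a minimal `≼`-factorization of `x`: a `⊑`-minimal `≼`-factorization. -/
def IsMinFac {M : Type*} [Monoid M] (r : M → M → Prop) (x : M) (l : List M) : Prop :=
  IsFac r x l ∧ ∀ m : List M, IsFac r x m → WordLe r m l → WordLe r l m

/-- `l` is an atomic `≼`-factorization of `x`. -/
def IsAtomicFac {M : Type*} [Monoid M] (r : M → M → Prop) (x : M) (l : List M) : Prop :=
  (∀ a ∈ l, RAtom r a) ∧ l.prod = x

/-- `l` is a minimal atomic `≼`-factorization of `x`. -/
def IsMinAtomicFac {M : Type*} [Monoid M] (r : M → M → Prop) (x : M) (l : List M) : Prop :=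
  IsMinFac r x l ∧ ∀ a ∈ l, RAtom r a

/-- Every `≼`-non-unit is a non-empty product of `≼`-irreducibles. -/
def Factorable {M : Type*} [Monoid M] (r : M → M → Prop) : Prop :=
  ∀ x : M, RNonUnit r x →
    ∃ l : List M, l ≠ [] ∧ (∀ a ∈ l, RIrred r a) ∧ l.prod = x

/-- Every `≼`-non-unit is a non-empty product of `≼`-atoms. -/
def Atomic {M : Type*} [Monoid M] (r : M → M → Prop) : Prop :=
  ∀ x : M, RNonUnit r x →
    ∃ l : List M, l ≠ [] ∧ (∀ a ∈ l, RAtom r a) ∧ l.prod = x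

/-- The premonoid `(M, r)` is finitely generated up to units. -/
def IsFGU {M : Type*} [Monoid M] (r : M → M → Prop) : Prop :=
  ∃ A : Set M, A.Finite ∧
    Submonoid.closure
      {w : M | ∃ u a v : M, RUnit r u ∧ a ∈ A ∧ RUnit r v ∧ w = u * a * v} = ⊤

/-- The submonoid generated by the `∣_M`-divisors of `x` (ground monoid of the germ of a
premonoid at `x`). -/
def GermSub {M : Type*} [Monoid M] (x : M) : Submonoid M :=
  Submonoid.closure {y : M | Dvd2 y x}

/-- Membership in the smallest divisor-closed submonoid containing `x`. -/
inductive InDC {M : Type*} [Monoid M] (x : M) : M → Prop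
  | base : InDC x x
  | one : InDC x 1
  | mul {a b : M} : InDC x a → InDC x b → InDC x (a * b)
  | dvd {a b : M} : InDC x b → Dvd2 a b → InDC x a

/-- The smallest divisor-closed submonoid of `M` containing `x`. -/
def DCSub {M : Type*} [Monoid M] (x : M) : Submonoid M where
  carrier := {y : M | InDC x y}
  mul_mem' := fun ha hb => InDC.mul ha hb
  one_mem' := InDC.one

/-- `(M, r)` is a weakly positive monoid. -/
def WeaklyPositive {M : Type*} [Monoid M] (r : M → M → Prop) : Prop :=
  (∀ x u v : M, RUnit r u → RUnit r v → r (u * x * v) x) ∧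
    (∀ x a b : M, r x (a * x * b))

/-- `(M, r)` is locally of finite type (loft). -/
def IsLoft {M : Type*} [Monoid M] (r : M → M → Prop) : Prop :=
  ∀ x : M, RNonUnit r x →
    ∃ A : Set M, A.Finite ∧ A ⊆ {a : M | RIrred r a} ∧
      ∀ l : List M, IsFac r x l →
        ∃ m : List M, (∀ a ∈ m, a ∈ A) ∧ WordEquiv r l m

/-- `(M, r)` is BF-factorable. -/
def IsBFFactorable {M : Type*} [Monoid M] (r : M → M → Prop) : Prop :=
  ∀ x : M, RNonUnit r x →
    {n : ℕ | ∃ l : List M, IsFac r x l ∧ l.length = n}.Finite ∧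
      {n : ℕ | ∃ l : List M, IsFac r x l ∧ l.length = n}.Nonempty

/-- `(M, r)` is BmF-factorable. -/
def IsBmFFactorable {M : Type*} [Monoid M] (r : M → M → Prop) : Prop :=
  ∀ x : M, RNonUnit r x →
    {n : ℕ | ∃ l : List M, IsMinFac r x l ∧ l.length = n}.Finite ∧
      {n : ℕ | ∃ l : List M, IsMinFac r x l ∧ l.length = n}.Nonempty

/-- `(M, r)` is FF-factorable: modulo `⊑`-equivalence, every `≼`-non-unit has finitely
many (and at least one) `≼`-factorizations. -/
def IsFFFactorable {M : Type*} [Monoid M] (r : M → M → Prop) : Prop :=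
  ∀ x : M, RNonUnit r x →
    (∃ l : List M, IsFac r x l) ∧
      ∃ F : Set (List M), F.Finite ∧
        ∀ l : List M, IsFac r x l → ∃ m ∈ F, IsFac r x m ∧ WordEquiv r l m

/-- `(M, r)` is FmF-factorable. -/
def IsFmFFactorable {M : Type*} [Monoid M] (r : M → M → Prop) : Prop :=
  ∀ x : M, RNonUnit r x →
    (∃ l : List M, IsMinFac r x l) ∧
      ∃ F : Set (List M), F.Finite ∧
        ∀ l : List M, IsMinFac r x l → ∃ m ∈ F, IsMinFac r x m ∧ WordEquiv r l m

/-- `(M, r)` is FF-atomic. -/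
def IsFFAtomic {M : Type*} [Monoid M] (r : M → M → Prop) : Prop :=
  ∀ x : M, RNonUnit r x →
    (∃ l : List M, IsAtomicFac r x l) ∧
      ∃ F : Set (List M), F.Finite ∧
        ∀ l : List M, IsAtomicFac r x l → ∃ m ∈ F, IsAtomicFac r x m ∧ WordEquiv r l m

/-- `(M, r)` is FmF-atomic. -/
def IsFmFAtomic {M : Type*} [Monoid M] (r : M → M → Prop) : Prop :=
  ∀ x : M, RNonUnit r x →
    (∃ l : List M, IsMinAtomicFac r x l) ∧
      ∃ F : Set (List M), F.Finite ∧
        ∀ l : List M, IsMinAtomicFac r x l → ∃ m ∈ F, IsMinAtomicFac r x m ∧ WordEquiv r l m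


section Words

variable {M : Type*} {r : M → M → Prop}

theorem exists_embedding_comp_eq_iff_card_fiber_le {α β γ : Type*} [Finite α] [Finite β]
    (f : α → γ) (g : β → γ) :
    (∃ σ : α ↪ β, ∀ i, g (σ i) = f i) ↔
      ∀ c, Nat.card {i // f i = c} ≤ Nat.card {j // g j = c} := by
  constructor
  · rintro ⟨σ, hσ⟩ c
    exact Finite.card_le_of_embedding ⟨fun i => ⟨σ i, (hσ i).trans i.2⟩,
      fun i j hij => Subtype.ext (σ.injective (congrArg Subtype.val hij))⟩
  · intro h
    have hfiber (c : γ) : Nonempty ({i // f i = c} ↪ {j // g j = c}) := by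
      have := Fintype.ofFinite {i // f i = c}
      have := Fintype.ofFinite {j // g j = c}
      have hc := h c
      rw [Nat.card_eq_fintype_card, Nat.card_eq_fintype_card] at hc
      exact Function.Embedding.nonempty_of_card_le hc
    let τ := (Equiv.sigmaFiberEquiv f).symm.toEmbedding.trans
      ((Function.Embedding.sigmaMap (Function.Embedding.refl γ) fun c => (hfiber c).some).trans
        (Equiv.sigmaFiberEquiv g).toEmbedding)
    exact ⟨τ, fun i => ((hfiber (f i)).some ⟨i, rfl⟩).2⟩

theorem WordLe.symm_of_length_le {l m : List M} (h : WordLe r l m)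
    (hlen : m.length ≤ l.length) : WordLe r m l := by
  obtain ⟨σ, hσ⟩ := h
  have hcard : l.length ≤ m.length := by simpa using Fintype.card_le_of_embedding σ
  have hbij : Function.Bijective σ := by
    rw [Fintype.bijective_iff_injective_and_card]
    exact ⟨σ.injective, by simpa using le_antisymm hcard hlen⟩
  let e := Equiv.ofBijective σ hbij
  refine ⟨e.symm.toEmbedding, fun j => ?_⟩
  have := hσ (e.symm j)
  rw [show σ (e.symm j) = j from e.apply_symm_apply j] at this
  exact this.symm

theorem exists_isMinFac_of_isFac [Monoid M] {x : M} {l : List M} (hl : IsFac r x l) :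
    ∃ m, IsMinFac r x m := by
  obtain ⟨m, hm, hmin⟩ :=
    (InvImage.wf List.length wellFounded_lt).has_min {m | IsFac r x m} ⟨l, hl⟩
  exact ⟨m, hm, fun k hk hkm => hkm.symm_of_length_le (not_lt.mp (hmin k hk))⟩

theorem RLt.trans_rel [IsTrans M r] {a b c : M} (h : RLt r a b) (h' : r b c) : RLt r a c :=
  ⟨_root_.trans h.1 h', fun hca => h.2 (_root_.trans h' hca)⟩

theorem RLt.of_rel_of_rLt [IsTrans M r] {a b c : M} (h : r a b) (h' : RLt r b c) : RLt r a c :=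
  ⟨_root_.trans h h'.1, fun hca => h'.2 (_root_.trans hca h)⟩

theorem setOf_rLt_ssubset [IsTrans M r] {A : Set M} {a c d : M} (ha : a ∈ A)
    (hca : AntisymmRel r c a) (hcd : RLt r c d) :
    {b ∈ A | RLt r b c} ⊂ {b ∈ A | RLt r b d} := by
  refine (Set.ssubset_iff_of_subset ?_).mpr
    ⟨a, ⟨ha, RLt.of_rel_of_rLt hca.2 hcd⟩, fun h => h.2.2 hca.1⟩
  exact fun b hb => ⟨hb.1, hb.2.trans_rel hcd.1⟩

variable [IsPreorder M r]

variable (r) in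
noncomputable def letterCount (l : List M) (c : Antisymmetrization M r) : ℕ :=
  Nat.card {i : Fin l.length // toAntisymmetrization r (l.get i) = c}

theorem wordLe_iff_letterCount_le {l m : List M} :
    WordLe r l m ↔ letterCount r l ≤ letterCount r m := by
  have hclass (a b : M) :
      (r a b ∧ r b a) ↔ toAntisymmetrization r b = toAntisymmetrization r a :=
    ⟨fun h => Quotient.sound (AntisymmRel.symm h), fun h => AntisymmRel.symm (Quotient.exact h)⟩
  simp only [WordLe, hclass, Pi.le_def, letterCount]
  exact exists_embedding_comp_eq_iff_card_fiber_le (fun i => toAntisymmetrization r (l.get i))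
    (fun j => toAntisymmetrization r (m.get j))

theorem exists_finite_wordEquiv_reps {S : Set (List M)} {C : Set (Antisymmetrization M r)}
    (hC : C.Finite) (hS : ∀ l ∈ S, ∀ a ∈ l, toAntisymmetrization r a ∈ C)
    (hmin : ∀ l ∈ S, ∀ m ∈ S, WordLe r l m → WordLe r m l) :
    ∃ F ⊆ S, F.Finite ∧ ∀ l ∈ S, ∃ m ∈ F, WordEquiv r l m := by
  have := hC.to_subtype
  let ν (l : List M) (c : C) : ℕ := letterCount r l c
  have hle : ∀ l ∈ S, ∀ m, ν l ≤ ν m → WordLe r l m := by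
    refine fun l hl m h => wordLe_iff_letterCount_le.mpr fun c => ?_
    by_cases hc : c ∈ C
    · exact h ⟨c, hc⟩
    · have : IsEmpty {i : Fin l.length // toAntisymmetrization r (l.get i) = c} :=
        ⟨fun i => hc (i.2 ▸ hS l hl _ (List.get_mem l i.1))⟩
      simp [letterCount]
  have hanti : IsAntichain (· ≤ ·) (ν '' S) := by
    rintro _ ⟨l, hl, rfl⟩ _ ⟨m, hm, rfl⟩ hne hlm
    have hml := wordLe_iff_letterCount_le.mp (hmin l hl m hm (hle l hl m hlm))
    exact hne (le_antisymm hlm fun c => hml c)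
  obtain ⟨F, hFS, hinj, himg⟩ := (S.surjOn_image ν).exists_subset_injOn_image_eq
  have hfin : (ν '' S).Finite :=
    hanti.finite_of_partiallyWellOrderedOn (Set.isPWO_of_wellQuasiOrderedLE _)
  refine ⟨F, hFS, Set.Finite.of_finite_image (himg ▸ hfin) hinj, fun l hl => ?_⟩
  obtain ⟨m, hmF, hml⟩ := himg.symm ▸ Set.mem_image_of_mem ν hl
  exact ⟨m, hmF, hle l hl m hml.ge, hle m (hFS hmF) l hml.le⟩

end Words

section Divisibility

variable {H : Type*} [Monoid H]

theorem Dvd2.refl (a : H) : Dvd2 a a := ⟨1, 1, by simp⟩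

theorem Dvd2.trans {a b c : H} : Dvd2 a b → Dvd2 b c → Dvd2 a c
  | ⟨u, v, hb⟩, ⟨p, q, hc⟩ => ⟨p * u, v * q, by simp only [hc, hb, mul_assoc]⟩

instance : IsPreorder H (Dvd2 : H → H → Prop) where
  refl := Dvd2.refl
  trans _ _ _ := Dvd2.trans

theorem dvd2_mul_right (a b : H) : Dvd2 a (a * b) := ⟨1, b, by simp⟩

theorem dvd2_mul_left (a b : H) : Dvd2 b (a * b) := ⟨a, 1, by simp⟩

theorem dvd2_prod_of_mem {a : H} {l : List H} (h : a ∈ l) : Dvd2 a l.prod := by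
  obtain ⟨s, t, rfl⟩ := List.mem_iff_append.mp h
  exact ⟨s.prod, t.prod, by rw [List.prod_append, List.prod_cons, mul_assoc]⟩

theorem rUnit_of_isUnit {u : H} (hu : IsUnit u) : RUnit Dvd2 u := by
  obtain ⟨u, rfl⟩ := hu
  exact ⟨⟨↑u⁻¹, 1, by simp⟩, ⟨1, u, by simp⟩⟩

def unitAssociates (A : Set H) : Set H :=
  {w | ∃ u v : Hˣ, ∃ a ∈ A, w = u * a * v}

theorem units_mul_mem_unitAssociates {A : Set H} (e : Hˣ) {w : H} (hw : w ∈ unitAssociates A) :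
    ↑e * w ∈ unitAssociates A := by
  obtain ⟨u, v, a, ha, rfl⟩ := hw
  exact ⟨e * u, v, a, ha, by simp only [Units.val_mul, mul_assoc]⟩

theorem mul_units_mem_unitAssociates {A : Set H} (e : Hˣ) {w : H} (hw : w ∈ unitAssociates A) :
    w * e ∈ unitAssociates A := by
  obtain ⟨u, v, a, ha, rfl⟩ := hw
  exact ⟨u, v * e, a, ha, by simp only [Units.val_mul, mul_assoc]⟩

theorem antisymmRel_of_mem_unitAssociates {A : Set H} {w : H} (hw : w ∈ unitAssociates A) :
    ∃ a ∈ A, AntisymmRel Dvd2 w a := by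
  obtain ⟨u, v, a, ha, rfl⟩ := hw
  exact ⟨a, ha, ⟨↑u⁻¹, ↑v⁻¹, by simp [mul_assoc]⟩, ⟨u, v, rfl⟩⟩

theorem exists_list_of_mem_closure_unitAssociates {A : Set H} {y : H}
    (hy : y ∈ Submonoid.closure (unitAssociates A)) (hyu : ¬IsUnit y) :
    ∃ L : List H, (∀ c ∈ L, c ∈ unitAssociates A ∧ ¬IsUnit c) ∧ L.prod = y := by
  obtain ⟨l, hl, rfl⟩ := Submonoid.exists_list_of_mem_closure hy
  suffices IsUnit l.prod ∨
      ∃ L : List H, (∀ c ∈ L, c ∈ unitAssociates A ∧ ¬IsUnit c) ∧ L.prod = l.prod from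
    this.resolve_left hyu
  clear hy hyu
  induction l with
  | nil => exact Or.inl (by simp)
  | cons w t ih =>
    have hw := hl w List.mem_cons_self
    rw [List.prod_cons]
    rcases ih fun c hc => hl c (List.mem_cons_of_mem w hc) with ⟨e, he⟩ | ⟨L, hL, hLt⟩
    · by_cases hwu : IsUnit w
      · exact Or.inl (hwu.mul (he ▸ e.isUnit))
      · refine Or.inr ⟨[w * e], ?_, by simp [he]⟩
        simpa [Units.isUnit_mul_units] using ⟨mul_units_mem_unitAssociates e hw, hwu⟩
    · by_cases hwu : IsUnit w
      · obtain ⟨e, rfl⟩ := hwu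
        match L, hL, hLt with
        | [], _, hLt => exact Or.inl (by simp [← hLt])
        | c :: L', hL, hLt =>
          refine Or.inr ⟨(↑e * c) :: L', fun d hd => ?_, by simp [← hLt, mul_assoc]⟩
          rcases List.mem_cons.mp hd with rfl | hd
          · have hc := hL c List.mem_cons_self
            exact ⟨units_mul_mem_unitAssociates e hc.1, by simpa using hc.2⟩
          · exact hL d (List.mem_cons_of_mem c hd)
      · refine Or.inr ⟨w :: L, fun d hd => ?_, by simp [hLt]⟩
        rcases List.mem_cons.mp hd with rfl | hd
        · exact ⟨hw, hwu⟩
        · exact hL d hd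

end Divisibility

def IsAcyclic (H : Type*) [Monoid H] : Prop :=
  ∀ u v x : H, (¬ IsUnit u ∨ ¬ IsUnit v) → u * x * v ≠ x

namespace IsAcyclic

variable {H : Type*} [Monoid H]

theorem isUnit_of_mul_mul_eq (hH : IsAcyclic H) {u v x : H} (h : u * x * v = x) :
    IsUnit u ∧ IsUnit v := by
  by_contra hu
  exact hH u v x (not_and_or.mp hu) h

theorem isUnit_mul_iff (hH : IsAcyclic H) {a b : H} : IsUnit (a * b) ↔ IsUnit a ∧ IsUnit b := by
  refine ⟨fun ⟨w, hw⟩ => ⟨?_, ?_⟩, fun h => h.1.mul h.2⟩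
  · exact (hH.isUnit_of_mul_mul_eq (u := a) (v := b * ↑w⁻¹) (x := 1)
      (by rw [mul_one, ← mul_assoc, ← hw, Units.mul_inv])).1
  · exact (hH.isUnit_of_mul_mul_eq (u := ↑w⁻¹ * a) (v := b) (x := 1)
      (by rw [mul_one, mul_assoc, ← hw, Units.inv_mul])).2

theorem isUnit_of_rUnit (hH : IsAcyclic H) {u : H} (h : RUnit Dvd2 u) : IsUnit u := by
  obtain ⟨p, q, h1⟩ := h.1
  have hpuq : IsUnit (p * u * q) := h1 ▸ isUnit_one
  exact (hH.isUnit_mul_iff.mp (hH.isUnit_mul_iff.mp hpuq).1).2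

theorem rNonUnit_iff (hH : IsAcyclic H) {u : H} : RNonUnit Dvd2 u ↔ ¬IsUnit u :=
  not_congr ⟨hH.isUnit_of_rUnit, rUnit_of_isUnit⟩

theorem rLt_mul_right (hH : IsAcyclic H) {b : H} (hb : ¬IsUnit b) (a : H) :
    RLt Dvd2 a (a * b) := by
  refine ⟨dvd2_mul_right a b, fun ⟨p, q, h⟩ => hb ?_⟩
  have := hH.isUnit_of_mul_mul_eq (u := p) (x := a) (v := b * q)
    (by rw [← mul_assoc, mul_assoc p a b]; exact h.symm)
  exact (hH.isUnit_mul_iff.mp this.2).1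

theorem rLt_mul_left (hH : IsAcyclic H) {a : H} (ha : ¬IsUnit a) (b : H) :
    RLt Dvd2 b (a * b) := by
  refine ⟨dvd2_mul_left a b, fun ⟨p, q, h⟩ => ha ?_⟩
  have := hH.isUnit_of_mul_mul_eq (u := p * a) (x := b) (v := q)
    (by rw [mul_assoc p a b]; exact h.symm)
  exact (hH.isUnit_mul_iff.mp this.1).2

theorem rIrred_iff_rAtom (hH : IsAcyclic H) {a : H} : RIrred Dvd2 a ↔ RAtom Dvd2 a := by
  refine ⟨fun ⟨ha, hirr⟩ => ⟨ha, fun y z hy hz => ?_⟩,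
    fun ⟨ha, hat⟩ => ⟨ha, fun y z hy hz _ _ => hat y z hy hz⟩⟩
  rintro rfl
  exact hirr y z hy hz (hH.rLt_mul_right (hH.rNonUnit_iff.mp hz) y)
    (hH.rLt_mul_left (hH.rNonUnit_iff.mp hy) z) rfl

theorem isMinAtomicFac_iff (hH : IsAcyclic H) {x : H} {l : List H} :
    IsMinAtomicFac Dvd2 x l ↔ IsMinFac Dvd2 x l :=
  ⟨And.left, fun h => ⟨h, fun a ha => hH.rIrred_iff_rAtom.mp (h.1.1 a ha)⟩⟩

theorem exists_eq_singleton_of_rAtom_prod (hH : IsAcyclic H) {L : List H}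
    (hL : ∀ c ∈ L, ¬IsUnit c) (h : RAtom Dvd2 L.prod) : ∃ c, L = [c] :=
  match L, hL, h with
  | [], _, h => (h.1 (rUnit_of_isUnit (by simp))).elim
  | [c], _, _ => ⟨c, rfl⟩
  | c :: c' :: t, hL, h => by
    refine absurd rfl (h.2 c (c' :: t).prod ?_ ?_) <;> rw [hH.rNonUnit_iff]
    · exact hL c List.mem_cons_self
    · rw [List.prod_cons, hH.isUnit_mul_iff, not_and_or]
      exact Or.inl (hL c' (by simp))

end IsAcyclic

section Germ

variable {H : Type*} [Monoid H]

def DivisorsFactorOver (x : H) (A : Set H) : Prop :=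
  ∀ y, Dvd2 y x → ¬IsUnit y →
    ∃ L : List H, (∀ c ∈ L, ¬IsUnit c ∧ ∃ a ∈ A, AntisymmRel Dvd2 c a) ∧ L.prod = y

theorem IsAcyclic.exists_divisorsFactorOver_of_isFGU (hH : IsAcyclic H) {x : H}
    (h : IsFGU (SubRel Dvd2 (GermSub x))) :
    ∃ A : Set H, A.Finite ∧ DivisorsFactorOver x A := by
  obtain ⟨A, hAfin, hAgen⟩ := h
  refine ⟨Subtype.val '' A, hAfin.image _, fun y hyx hyu => ?_⟩
  have hy : y ∈ Submonoid.closure (unitAssociates (Subtype.val '' A)) := by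
    have hyK : (⟨y, Submonoid.subset_closure hyx⟩ : GermSub x) ∈ Submonoid.closure _ :=
      hAgen ▸ Submonoid.mem_top _
    have := Submonoid.mem_map_of_mem (GermSub x).subtype hyK
    rw [MonoidHom.map_mclosure] at this
    refine Submonoid.closure_mono ?_ this
    rintro _ ⟨_, ⟨u, a, v, hu, ha, hv, rfl⟩, rfl⟩
    obtain ⟨u', hu'⟩ := hH.isUnit_of_rUnit hu
    obtain ⟨v', hv'⟩ := hH.isUnit_of_rUnit hv
    exact ⟨u', v', a, ⟨a, ha, rfl⟩, by simp [hu', hv']⟩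
  obtain ⟨L, hL, hLy⟩ := exists_list_of_mem_closure_unitAssociates hy hyu
  exact ⟨L, fun c hc => ⟨(hL c hc).2, antisymmRel_of_mem_unitAssociates (hL c hc).1⟩, hLy⟩

theorem DivisorsFactorOver.exists_antisymmRel_of_rAtom (hH : IsAcyclic H) {x : H} {A : Set H}
    (hA : DivisorsFactorOver x A) {b : H} (hb : RAtom Dvd2 b) (hbx : Dvd2 b x) :
    ∃ a ∈ A, AntisymmRel Dvd2 b a := by
  obtain ⟨L, hL, rfl⟩ := hA b hbx (hH.rNonUnit_iff.mp hb.1)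
  obtain ⟨c, rfl⟩ := hH.exists_eq_singleton_of_rAtom_prod (fun c hc => (hL c hc).1) hb
  simpa using (hL c List.mem_cons_self).2

/-- Induction on the number of elements of `A` strictly below `d`: a letter `c` of a proper
factor of `d` is associated to some `a ∈ A` with `a ≺ d` but not `a ≺ c`. -/
theorem DivisorsFactorOver.mem_closure_rAtom (hH : IsAcyclic H) {x : H} {A : Set H}
    (hAfin : A.Finite) (hA : DivisorsFactorOver x A) {d : H} (hdx : Dvd2 d x) (hd : ¬IsUnit d) :
    d ∈ Submonoid.closure {a | RAtom Dvd2 a} := by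
  induction hn : {a ∈ A | RLt Dvd2 a d}.ncard using Nat.strong_induction_on generalizing d with
  | _ n ih =>
  by_cases hat : RAtom Dvd2 d
  · exact Submonoid.subset_closure hat
  obtain ⟨y, z, hy, hz, rfl⟩ : ∃ y z, RNonUnit Dvd2 y ∧ RNonUnit Dvd2 z ∧ d = y * z := by
    by_contra! h
    exact hat ⟨hH.rNonUnit_iff.mpr hd, h⟩
  rw [hH.rNonUnit_iff] at hy hz
  have below (w : H) (hw : RLt Dvd2 w (y * z)) (hwu : ¬IsUnit w) :
      w ∈ Submonoid.closure {a | RAtom Dvd2 a} := by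
    obtain ⟨L, hL, rfl⟩ := hA w (hw.1.trans hdx) hwu
    refine Submonoid.list_prod_mem _ fun c hc => ?_
    obtain ⟨hcu, a, ha, hca⟩ := hL c hc
    have hcd : RLt Dvd2 c (y * z) := RLt.of_rel_of_rLt (dvd2_prod_of_mem hc) hw
    refine ih _ ?_ ((dvd2_prod_of_mem hc).trans (hw.1.trans hdx)) hcu rfl
    exact hn ▸ Set.ncard_lt_ncard (setOf_rLt_ssubset ha hca hcd) (hAfin.subset fun _ h => h.1)
  exact Submonoid.mul_mem _ (below y (hH.rLt_mul_right hz y) hy) (below z (hH.rLt_mul_left hy z) hz)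

end Germ

/-- Corollary 5.2. Every acyclic weakly l.f.g.u. monoid is
FmF-atomic (w.r.t. the divisibility preorder `∣_H`). -/
theorem stmt15 {H : Type*} [Monoid H]
    (hacy : ∀ u v x : H, (¬ IsUnit u ∨ ¬ IsUnit v) → u * x * v ≠ x)
    (hwlfgu : ∀ x : H, RNonUnit (Dvd2 : H → H → Prop) x →
      IsFGU (SubRel (Dvd2 : H → H → Prop) (GermSub x))) :
    IsFmFAtomic (Dvd2 : H → H → Prop) := by
  have hH : IsAcyclic H := hacy
  intro x hx
  obtain ⟨A, hAfin, hA⟩ := hH.exists_divisorsFactorOver_of_isFGU (hwlfgu x hx)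
  obtain ⟨l, hl, hlx⟩ := Submonoid.exists_list_of_mem_closure
    (hA.mem_closure_rAtom hH hAfin (Dvd2.refl x) (hH.rNonUnit_iff.mp hx))
  obtain ⟨m, hm⟩ :=
    exists_isMinFac_of_isFac ⟨fun a ha => hH.rIrred_iff_rAtom.mpr (hl a ha), hlx⟩
  have hclasses (l : List H) (hl : IsMinAtomicFac Dvd2 x l) (a : H) (ha : a ∈ l) :
      toAntisymmetrization Dvd2 a ∈ toAntisymmetrization Dvd2 '' A := by
    obtain ⟨b, hb, hab⟩ := hA.exists_antisymmRel_of_rAtom hH (hl.2 a ha)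
      (hl.1.1.2 ▸ dvd2_prod_of_mem ha)
    exact ⟨b, hb, Quotient.sound hab.symm⟩
  obtain ⟨F, hFS, hF, hreps⟩ := exists_finite_wordEquiv_reps (hAfin.image _) hclasses
    fun l hl m hm => hm.1.2 l hl.1.1
  exact ⟨⟨m, hH.isMinAtomicFac_iff.mpr hm⟩, F, hF,
    fun l hl => (hreps l hl).imp fun m ⟨hmF, hlm⟩ => ⟨hmF, hFS hmF, hlm⟩⟩

end FactPaper
end

section
/- Every unit-cancellative, weakly l.f.g.u., commutative monoid is FF-atomic. -/
open Pointwise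

namespace FactPaper

/-!
Fix a non-unit `x` and pass to `Associates H`. Since the germ at `x` is f.g.u., every divisor of
`x` is, up to a unit, a product of elements of a finite set `T` of non-units. Unit-cancellativity
makes the multisets over `T` whose product is associated to `x` an antichain, hence a finite set by
Dickson's lemma. This bounds the lengths of factorizations of `x` into non-units, and one of
maximal length is atomic. Every atom dividing `x` is associated to an element of `T`, so an atomic
factorization of `x` is determined up to `⊑`-equivalence by one of these finitely many multisets.
-/

section Divisibility

variable {H : Type*} [CommMonoid H]

theorem dvd2_iff_dvd {a b : H} : Dvd2 a b ↔ a ∣ b := by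
  constructor
  · rintro ⟨u, v, rfl⟩
    exact ⟨u * v, by rw [mul_comm u a, mul_assoc]⟩
  · rintro ⟨c, rfl⟩
    exact ⟨1, c, by rw [one_mul]⟩

theorem rUnit_dvd2_iff {u : H} : RUnit (Dvd2 : H → H → Prop) u ↔ IsUnit u := by
  simp only [RUnit, dvd2_iff_dvd, one_dvd, and_true, isUnit_iff_dvd_one]

theorem rNonUnit_dvd2_iff {u : H} : RNonUnit (Dvd2 : H → H → Prop) u ↔ ¬IsUnit u :=
  rUnit_dvd2_iff.not

theorem rAtom_dvd2_iff_irreducible {p : H} :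
    RAtom (Dvd2 : H → H → Prop) p ↔ Irreducible p := by
  simp only [RAtom, rNonUnit_dvd2_iff, irreducible_iff]
  refine and_congr_right fun _ => ⟨fun h a b hab => ?_, fun h a b ha hb hab => ?_⟩
  · by_contra! hu
    exact h a b hu.1 hu.2 hab
  · exact (h hab).elim ha hb

theorem dvd2_of_mk_eq {a b : H} (h : Associates.mk a = Associates.mk b) :
    Dvd2 a b ∧ Dvd2 b a :=
  let ⟨hab, hba⟩ := (Associates.mk_eq_mk_iff_associated.mp h).dvd_dvd
  ⟨dvd2_iff_dvd.mpr hab, dvd2_iff_dvd.mpr hba⟩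

end Divisibility

section Words

variable {M β : Type*} [DecidableEq β] {r : M → M → Prop} (f : M → β)

theorem wordLe_of_subperm_map (hf : ∀ a b, f a = f b → r a b ∧ r b a) {l m : List M}
    (h : (l.map f).Subperm (m.map f)) : WordLe r l m := by
  let σ : Fin l.length → Fin m.length :=
    finCongr (List.length_map f) ∘ h.idxInj ∘ finCongr (List.length_map f).symm
  have hσ : σ.Injective :=
    (finCongr _).injective.comp (h.idxInj_injective.comp (finCongr _).injective)
  refine ⟨⟨σ, hσ⟩, fun i => hf _ _ ?_⟩
  have key := h.getElem_idxInj_eq_getElem (i := finCongr (List.length_map f).symm i)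
  rw [List.getElem_map, List.getElem_map] at key
  exact key.symm

theorem wordEquiv_of_perm_map (hf : ∀ a b, f a = f b → r a b ∧ r b a) {l m : List M}
    (h : (l.map f).Perm (m.map f)) : WordEquiv r l m :=
  ⟨wordLe_of_subperm_map f hf h.subperm, wordLe_of_subperm_map f hf h.symm.subperm⟩

end Words

section Multisets

variable {M : Type*} [CommMonoid M] {T : Set M}

theorem Multiset.eq_zero_of_isUnit_prod (hT : ∀ b ∈ T, ¬IsUnit b) {t : Multiset M}
    (ht : ∀ b ∈ t, b ∈ T) (hu : IsUnit t.prod) : t = 0 := by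
  by_contra h
  obtain ⟨b, hb⟩ := Multiset.exists_mem_of_ne_zero h
  exact hT b (ht b hb) (isUnit_of_dvd_unit (Multiset.dvd_prod hb) hu)

theorem mem_of_irreducible_of_mem_closure (hT : ∀ b ∈ T, ¬IsUnit b) {a : M}
    (ha : Irreducible a) (hmem : a ∈ Submonoid.closure T) : a ∈ T := by
  obtain ⟨t, ht, rfl⟩ := Submonoid.exists_multiset_of_mem_closure hmem
  induction t using Multiset.induction_on with
  | empty => exact (ha.not_isUnit (by simp)).elim
  | cons b t _ =>
    have hb : b ∈ T := ht b (Multiset.mem_cons_self b t)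
    rw [Multiset.prod_cons] at ha ⊢
    obtain hbu | htu := ha.isUnit_or_isUnit rfl
    · exact absurd hbu (hT b hb)
    · have ht0 := Multiset.eq_zero_of_isUnit_prod hT
        (fun c hc => ht c (Multiset.mem_cons_of_mem hc)) htu
      simpa [ht0] using hb

theorem exists_multiset_prod_eq_of_forall_mem_closure {l : List M}
    (hl : ∀ a ∈ l, ¬IsUnit a ∧ a ∈ Submonoid.closure T) :
    ∃ t : Multiset M, (∀ b ∈ t, b ∈ T) ∧ t.prod = l.prod ∧
      l.length ≤ Multiset.card t := by
  induction l with
  | nil => exact ⟨0, by simp, by simp, le_rfl⟩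
  | cons a l ih =>
    obtain ⟨ha, hmem⟩ := hl a List.mem_cons_self
    obtain ⟨s, hs, rfl⟩ := Submonoid.exists_multiset_of_mem_closure hmem
    obtain ⟨t, ht, hprod, hlen⟩ := ih fun b hb => hl b (List.mem_cons_of_mem _ hb)
    have hs0 : s ≠ 0 := by rintro rfl; exact ha isUnit_one
    refine ⟨s + t, fun b hb => (Multiset.mem_add.mp hb).elim (hs b) (ht b), ?_, ?_⟩
    · rw [Multiset.prod_add, hprod, List.prod_cons]
    · rw [Multiset.card_add, List.length_cons]
      have := Multiset.card_pos.mpr hs0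
      omega

variable (huc : ∀ x y : M, ¬IsUnit y → x * y ≠ x)
include huc

theorem Multiset.eq_of_le_of_prod_eq (hT : ∀ b ∈ T, ¬IsUnit b) {t t' : Multiset M}
    (ht' : ∀ b ∈ t', b ∈ T) (hle : t ≤ t') (hprod : t.prod = t'.prod) : t = t' := by
  obtain ⟨d, rfl⟩ := Multiset.le_iff_exists_add.mp hle
  rw [Multiset.prod_add] at hprod
  have hd : IsUnit d.prod := by
    by_contra hd
    exact huc _ _ hd hprod.symm
  rw [Multiset.eq_zero_of_isUnit_prod hT (fun b hb => ht' b (Multiset.mem_add.mpr (.inr hb))) hd,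
    add_zero]

theorem finite_setOf_multiset_prod_eq (hTfin : T.Finite) (hT : ∀ b ∈ T, ¬IsUnit b) (x : M) :
    {t : Multiset M | (∀ b ∈ t, b ∈ T) ∧ t.prod = x}.Finite := by
  classical
  have : Finite T := hTfin.to_subtype
  set S := {t : Multiset M | (∀ b ∈ t, b ∈ T) ∧ t.prod = x}
  let count : Multiset M → T → ℕ := fun t b => t.count (b : M)
  have hle : ∀ t ∈ S, ∀ t' ∈ S, count t ≤ count t' → t ≤ t' := by
    intro t ht t' _ hcount
    refine Multiset.le_iff_count.mpr fun b => ?_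
    by_cases hb : b ∈ T
    · exact hcount ⟨b, hb⟩
    · simp [Multiset.count_eq_zero_of_notMem fun h => hb (ht.1 b h)]
  have hinj : S.InjOn count := fun t ht t' ht' h =>
    (hle t ht t' ht' h.le).antisymm (hle t' ht' t ht h.ge)
  -- Dickson's lemma: `T → ℕ` is well quasi-ordered, and the image of `S` is an antichain.
  refine Set.Finite.of_finite_image (WellQuasiOrderedLE.finite_of_isAntichain ?_) hinj
  rintro _ ⟨t, ht, rfl⟩ _ ⟨t', ht', rfl⟩ hne hcount
  exact hne (congrArg count (Multiset.eq_of_le_of_prod_eq huc hT ht'.1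
    (hle t ht t' ht' hcount) (ht.2.trans ht'.2.symm)))

end Multisets

section Lengths

variable {M : Type*}

def nonUnitFactorizationLengths [Monoid M] (x : M) : Set ℕ :=
  {n | ∃ l : List M, (∀ a ∈ l, ¬IsUnit a) ∧ l.prod = x ∧ l.length = n}

theorem bddAbove_nonUnitFactorizationLengths [CommMonoid M]
    (huc : ∀ x y : M, ¬IsUnit y → x * y ≠ x) {T : Set M} (hTfin : T.Finite)
    (hT : ∀ b ∈ T, ¬IsUnit b) {x : M} (hx : ∀ y, y ∣ x → y ∈ Submonoid.closure T) :
    BddAbove (nonUnitFactorizationLengths x) := by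
  obtain ⟨N, hN⟩ :=
    ((finite_setOf_multiset_prod_eq huc hTfin hT x).image Multiset.card).bddAbove
  refine ⟨N, ?_⟩
  rintro _ ⟨l, hl, rfl, rfl⟩
  obtain ⟨t, ht, hprod, hlen⟩ := exists_multiset_prod_eq_of_forall_mem_closure
    fun a ha => ⟨hl a ha, hx a (List.dvd_prod ha)⟩
  exact hlen.trans (hN ⟨t, ⟨ht, hprod⟩, rfl⟩)

/-- A factorization into non-units of maximal length consists of irreducibles. -/
theorem exists_irreducible_factorization_of_bddAbove [Monoid M] {x : M} (hx : ¬IsUnit x)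
    (hbdd : BddAbove (nonUnitFactorizationLengths x)) :
    ∃ l : List M, (∀ a ∈ l, Irreducible a) ∧ l.prod = x := by
  have hne : (nonUnitFactorizationLengths x).Nonempty :=
    ⟨1, [x], by simpa using hx, by simp, rfl⟩
  obtain ⟨l, hl, hprod, hlen⟩ := Nat.sSup_mem hne hbdd
  refine ⟨l, fun a ha => irreducible_iff.mpr ⟨hl a ha, fun y z hyz => ?_⟩, hprod⟩
  by_contra! hyz'
  obtain ⟨l₁, l₂, rfl⟩ := List.append_of_mem ha
  have hlonger : (l₁ ++ y :: z :: l₂).length ∈ nonUnitFactorizationLengths x := by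
    refine ⟨l₁ ++ y :: z :: l₂, ?_, ?_, rfl⟩
    · intro b hb
      simp only [List.mem_append, List.mem_cons] at hb
      rcases hb with hb | rfl | rfl | hb
      exacts [hl b (by simp [hb]), hyz'.1, hyz'.2, hl b (by simp [hb])]
    · rw [← hprod, hyz]
      simp [mul_assoc]
  have := le_csSup hbdd hlonger
  simp only [List.length_append, List.length_cons] at hlen this
  omega

theorem nonUnitFactorizationLengths_subset_mk [CommMonoid M] (x : M) :
    nonUnitFactorizationLengths x ⊆ nonUnitFactorizationLengths (Associates.mk x) := by
  rintro _ ⟨l, hl, rfl, rfl⟩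
  refine ⟨l.map Associates.mk, ?_, ?_, List.length_map _⟩
  · simpa [Associates.isUnit_mk] using hl
  · exact (map_list_prod Associates.mkMonoidHom l).symm

end Lengths

section Associates

variable {H : Type*} [CommMonoid H]

theorem Associates.mul_ne_self (huc : ∀ x y : H, ¬IsUnit y → x * y ≠ x) :
    ∀ a b : Associates H, ¬IsUnit b → a * b ≠ a := by
  rintro ⟨x⟩ ⟨y⟩ hy hxy
  obtain ⟨u, hu⟩ := Associates.mk_eq_mk_iff_associated.mp hxy
  have hyu : IsUnit (y * u) := by
    by_contra h
    exact huc x _ h (by rw [← mul_assoc]; exact hu)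
  exact hy (Associates.isUnit_mk.mpr (isUnit_of_mul_isUnit_left hyu))

theorem Associates.irreducible_mk_of_irreducible {p : H} (hp : Irreducible p) :
    Irreducible (Associates.mk p) := by
  refine irreducible_iff.mpr ⟨Associates.isUnit_mk.not.mpr hp.not_isUnit, ?_⟩
  rintro ⟨a⟩ ⟨b⟩ hab
  obtain ⟨u, hu⟩ := Associates.mk_eq_mk_iff_associated.mp hab.symm
  exact (hp.isUnit_or_isUnit (by rw [← hu, mul_assoc])).imp Associates.isUnit_mk.mpr
    fun h => Associates.isUnit_mk.mpr (isUnit_of_mul_isUnit_left h)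

theorem exists_finite_closure_of_isFGU_germ {x : H}
    (hfgu : IsFGU (SubRel (Dvd2 : H → H → Prop) (GermSub x))) :
    ∃ T : Set (Associates H), T.Finite ∧ (∀ b ∈ T, ¬IsUnit b) ∧
      ∀ b, b ∣ Associates.mk x → b ∈ Submonoid.closure T := by
  obtain ⟨A, hAfin, hAgen⟩ := hfgu
  let f : GermSub x →* Associates H := Associates.mkMonoidHom.comp (GermSub x).subtype
  refine ⟨f '' A \ {1}, (hAfin.image f).sdiff, fun b hb => ?_, ?_⟩
  · exact (Associates.isUnit_iff_eq_one b).not.mpr hb.2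
  rintro ⟨y⟩ hy
  have hyK : y ∈ GermSub x :=
    Submonoid.subset_closure (dvd2_iff_dvd.mpr (Associates.mk_dvd_mk.mp hy))
  have hmem := Submonoid.mem_map_of_mem f (hAgen ▸ Submonoid.mem_top (⟨y, hyK⟩ : GermSub x))
  rw [MonoidHom.map_mclosure] at hmem
  refine Submonoid.closure_le.mpr ?_ hmem
  rintro _ ⟨_, ⟨u, a, v, hu, ha, hv, rfl⟩, rfl⟩
  have hfu : f u = 1 := Associates.mk_eq_one.mpr (rUnit_dvd2_iff.mp hu)
  have hfv : f v = 1 := Associates.mk_eq_one.mpr (rUnit_dvd2_iff.mp hv)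
  rw [map_mul, map_mul, hfu, hfv, one_mul, mul_one]
  by_cases ha1 : f a = 1
  · rw [ha1]; exact one_mem _
  · exact Submonoid.subset_closure ⟨⟨a, ha, rfl⟩, ha1⟩

theorem map_mk_mem_of_isAtomicFac {T : Set (Associates H)} (hT : ∀ b ∈ T, ¬IsUnit b) {x : H}
    (hgen : ∀ b, b ∣ Associates.mk x → b ∈ Submonoid.closure T) {l : List H}
    (hl : IsAtomicFac (Dvd2 : H → H → Prop) x l) :
    (∀ b ∈ l.map Associates.mk, b ∈ T) ∧ (l.map Associates.mk).prod = Associates.mk x := by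
  refine ⟨fun b hb => ?_, hl.2 ▸ (map_list_prod Associates.mkMonoidHom l).symm⟩
  obtain ⟨a, ha, rfl⟩ := List.mem_map.mp hb
  exact mem_of_irreducible_of_mem_closure hT
    (Associates.irreducible_mk_of_irreducible (rAtom_dvd2_iff_irreducible.mp (hl.1 a ha)))
    (hgen _ (Associates.mk_dvd_mk.mpr (hl.2 ▸ List.dvd_prod ha)))

end Associates

theorem exists_finite_transversal {α β : Type*} [Nonempty α] {P : α → Prop} (κ : α → β)
    (hfin : (κ '' {a | P a}).Finite) :
    ∃ F : Set α, F.Finite ∧ ∀ a, P a → ∃ b ∈ F, P b ∧ κ a = κ b := by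
  refine ⟨Function.invFunOn κ {a | P a} '' (κ '' {a | P a}), hfin.image _, fun a ha => ?_⟩
  have hκa : ∃ b ∈ {a | P a}, κ b = κ a := ⟨a, ha, rfl⟩
  exact ⟨_, ⟨κ a, ⟨a, ha, rfl⟩, rfl⟩, Function.invFunOn_mem hκa,
    (Function.invFunOn_eq hκa).symm⟩

/-- Corollary 5.3. Every unit-cancellative, weakly l.f.g.u.,
commutative monoid is FF-atomic (w.r.t. the divisibility preorder `∣_H`). -/
theorem stmt16 {H : Type*} [CommMonoid H]
    (huc : ∀ x y : H, ¬ IsUnit y → x * y ≠ x)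
    (hwlfgu : ∀ x : H, RNonUnit (Dvd2 : H → H → Prop) x →
      IsFGU (SubRel (Dvd2 : H → H → Prop) (GermSub x))) :
    IsFFAtomic (Dvd2 : H → H → Prop) := by
  classical
  intro x hx
  obtain ⟨T, hTfin, hT, hgen⟩ := exists_finite_closure_of_isFGU_germ (hwlfgu x hx)
  have hucA := Associates.mul_ne_self huc
  have hbdd : BddAbove (nonUnitFactorizationLengths x) :=
    (bddAbove_nonUnitFactorizationLengths hucA hTfin hT hgen).mono
      (nonUnitFactorizationLengths_subset_mk x)
  obtain ⟨l, hl, hprod⟩ :=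
    exists_irreducible_factorization_of_bddAbove (rNonUnit_dvd2_iff.mp hx) hbdd
  refine ⟨⟨l, fun a ha => rAtom_dvd2_iff_irreducible.mpr (hl a ha), hprod⟩, ?_⟩
  let κ : List H → Multiset (Associates H) := fun l => (l.map Associates.mk : List _)
  have hκ : κ '' {l | IsAtomicFac Dvd2 x l} ⊆
      {t | (∀ b ∈ t, b ∈ T) ∧ t.prod = Associates.mk x} := by
    rintro _ ⟨l, hl, rfl⟩
    exact map_mk_mem_of_isAtomicFac hT hgen hl
  obtain ⟨F, hFfin, hF⟩ :=
    exists_finite_transversal κ ((finite_setOf_multiset_prod_eq hucA hTfin hT _).subset hκ)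
  refine ⟨F, hFfin, fun l hl => ?_⟩
  obtain ⟨m, hmF, hm, hlm⟩ := hF l hl
  exact ⟨m, hmF, hm, wordEquiv_of_perm_map Associates.mk (fun _ _ => dvd2_of_mk_eq)
    (Multiset.coe_eq_coe.mp hlm)⟩

end FactPaper
end
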